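/- arXiv:1806.10020 — 2 statements merged into one kernel-verified Lean document; each statement's English description precedes it below -/
import Mathlib

section
/- The residual spectrum of B on c₀ equals {λ ∈ ℂ : (|λ - r₁|⋯|λ - r_l|)^{1/l} < (|s₁|⋯|s_{l'}|)^{1/l'}}. -/
/-!
`B - λ` is lower bidiagonal, with diagonal `r_k - λ` and subdiagonal `s_k ≠ 0`. Solving
`(B - λ) x = 0` forwards (when `λ` is no `r_i`) or backwards from the periodically recurring zeros
of the diagonal (when it is) shows that `B - λ` is always injective.

The range of `B - λ` fails to be dense iff a nonzero functional on `c₀`, i.e. a nonzero sequence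
`y ∈ ℓ¹`, annihilates it; this means `(r_n - λ) y_n + s_n y_{n+1} = 0`, so `y` is a multiple of
`w_n = ∏_{j<n} (λ - r_j) / s_j`. Over a full period `l * l'` the sequence `w` gets multiplied by
`ζ = (∏ (λ - r_i))^{l'} / (∏ s_j)^l`, hence `w ∈ ℓ¹` iff `|ζ| < 1`, which is the claimed inequality
raised to the power `l * l'`.
-/

open Filter Topology Finset
open Fin.NatCast
open scoped ZeroAtInfty

lemma Fin.prod_range_natCast_add {M : Type*} [CommMonoid M] {n : ℕ} [NeZero n] (G : Fin n → M)
    (a : ℕ) : ∏ j ∈ range n, G ↑(a + j) = ∏ i, G i := by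
  rw [← Fin.prod_univ_eq_prod_range (fun j => G ↑(a + j))]
  simp only [Nat.cast_add, Fin.cast_val_eq_self]
  exact Fintype.prod_equiv (Equiv.addLeft (a : Fin n)) _ _ fun _ => rfl

lemma Fin.prod_range_mul_natCast_add {M : Type*} [CommMonoid M] {n : ℕ} [NeZero n]
    (G : Fin n → M) (a m : ℕ) : ∏ j ∈ range (n * m), G ↑(a + j) = (∏ i, G i) ^ m := by
  induction m with
  | zero => simp
  | succ m ih =>
    rw [Nat.mul_succ, prod_range_add, ih, pow_succ]
    simp_rw [← add_assoc]
    rw [Fin.prod_range_natCast_add]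

lemma summable_norm_iff_of_add_eq_mul {𝕜 : Type*} [NormedField 𝕜] {w : ℕ → 𝕜} {T : ℕ}
    [NeZero T] {ζ : 𝕜} (hw : ∀ n, w (n + T) = ζ * w n) (h0 : w 0 ≠ 0) :
    Summable (‖w ·‖) ↔ ‖ζ‖ < 1 := by
  have hmul : ∀ q m, w (q * T + m) = ζ ^ q * w m := by
    intro q m
    induction q with
    | zero => simp
    | succ q ih => rw [add_mul, one_mul, add_right_comm, hw, ih, pow_succ]; ring
  constructor
  · intro hs
    have hT : Tendsto (· * T) atTop atTop :=
      tendsto_atTop_mono (fun q => Nat.le_mul_of_pos_right q (NeZero.pos T)) tendsto_id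
    have hpow : ∀ q, ‖w (q * T)‖ / ‖w 0‖ = ‖ζ‖ ^ q := fun q => by
      rw [← add_zero (q * T), hmul, norm_mul, norm_pow,
        mul_div_cancel_right₀ _ (norm_ne_zero_iff.2 h0)]
    have := (hs.tendsto_atTop_zero.comp hT).div_const ‖w 0‖
    simp only [Function.comp_def, zero_div, hpow] at this
    simpa using tendsto_pow_atTop_nhds_zero_iff.1 this
  · intro hζ
    rw [← (Nat.divModEquiv T).symm.summable_iff]
    refine ((summable_geometric_of_lt_one (norm_nonneg ζ) hζ).mul_of_nonneg
      (Summable.of_finite (f := fun m : Fin T => ‖w m‖)) (fun _ => by positivity)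
      fun _ => norm_nonneg _).congr fun p => ?_
    simp [Nat.divModEquiv, hmul, norm_mul, norm_pow]

lemma rpow_one_div_lt_rpow_one_div_iff {a c : ℝ} (ha : 0 ≤ a) (hc : 0 ≤ c) {m n : ℕ}
    (hm : m ≠ 0) (hn : n ≠ 0) : a ^ (1 / m : ℝ) < c ^ (1 / n : ℝ) ↔ a ^ n < c ^ m := by
  rw [← pow_lt_pow_iff_left₀ (Real.rpow_nonneg ha _) (Real.rpow_nonneg hc _) (mul_ne_zero hm hn),
    pow_mul, mul_comm, pow_mul, one_div, one_div, Real.rpow_inv_natCast_pow ha hm,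
    Real.rpow_inv_natCast_pow hc hn]

section HahnBanach

variable {𝕜 : Type*} [RCLike 𝕜] {F : Type*} [NormedAddCommGroup F] [NormedSpace 𝕜 F]

lemma Submodule.exists_dual_eq_zero_ne_zero_of_notMem_closure (p : Submodule 𝕜 F) {x : F}
    (hx : x ∉ closure (p : Set F)) : ∃ f : StrongDual 𝕜 F, (∀ a ∈ p, f a = 0) ∧ f x ≠ 0 := by
  let : NormedSpace ℝ F := .restrictScalars ℝ 𝕜 F
  have : IsScalarTower ℝ 𝕜 F := .restrictScalars ℝ 𝕜 F
  obtain ⟨f, u, hfu, hux⟩ := RCLike.geometric_hahn_banach_closed_point (𝕜 := 𝕜)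
    (p.restrictScalars ℝ).convex.closure isClosed_closure hx
  have hu : 0 < u := by simpa using hfu 0 (subset_closure p.zero_mem)
  refine ⟨f, fun a ha => ?_, fun hfx => by simp [hfx] at hux; linarith⟩
  by_contra hfa
  -- `re f < u` on `p`, but `p` contains the multiple of `a` on which `f` takes the value `u`.
  have := hfu ((u / f a) • a) (subset_closure (p.smul_mem _ ha))
  simp [div_mul_cancel₀ _ hfa] at this

lemma ContinuousLinearMap.denseRange_iff_forall_comp_eq_zero {E : Type*} [AddCommGroup E]
    [Module 𝕜 E] [TopologicalSpace E] (T : E →L[𝕜] F) :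
    DenseRange T ↔ ∀ φ : StrongDual 𝕜 F, φ ∘L T = 0 → φ = 0 := by
  constructor
  · intro hT φ hφ
    ext y
    exact congrFun (hT.equalizer φ.continuous continuous_const
      (funext fun x => DFunLike.congr_fun hφ x)) y
  · intro h
    by_contra hnd
    obtain ⟨x, hx⟩ := not_forall.1 hnd
    obtain ⟨f, hf, hfx⟩ :=
      (LinearMap.range T.toLinearMap).exists_dual_eq_zero_ne_zero_of_notMem_closure (x := x)
        (by rwa [LinearMap.coe_range])
    exact hfx (by rw [h f (ContinuousLinearMap.ext fun e => hf _ ⟨e, rfl⟩)]; rfl)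

end HahnBanach

namespace ZeroAtInftyContinuousMap

section NormedField

variable {𝕜 : Type*} [NormedField 𝕜]

lemma norm_apply_le (x : C₀(ℕ, 𝕜)) (k : ℕ) : ‖x k‖ ≤ ‖x‖ := by
  rw [← norm_toBCF_eq_norm]
  exact x.toBCF.norm_coe_le_norm k

lemma norm_le_of_forall_le {x : C₀(ℕ, 𝕜)} {C : ℝ} (hC : 0 ≤ C) (h : ∀ k, ‖x k‖ ≤ C) :
    ‖x‖ ≤ C := by
  rw [← norm_toBCF_eq_norm]
  exact (BoundedContinuousFunction.norm_le hC).2 h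

def single (n : ℕ) : C₀(ℕ, 𝕜) where
  toFun k := if k = n then 1 else 0
  continuous_toFun := continuous_of_discreteTopology
  zero_at_infty' := by
    rw [cocompact_eq_atTop]
    exact tendsto_const_nhds.congr' <| (eventually_gt_atTop n).mono fun k hk => by
      simp [hk.ne']

@[simp] lemma single_apply (n k : ℕ) : (single n : C₀(ℕ, 𝕜)) k = if k = n then 1 else 0 := rfl

lemma sum_range_smul_single_apply (c : ℕ → 𝕜) (N j : ℕ) :
    (∑ k ∈ range N, c k • single k : C₀(ℕ, 𝕜)) j = if j < N then c j else 0 := by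
  induction N with
  | zero => simp
  | succ N ih =>
    rw [sum_range_succ, add_apply, ih, smul_apply, single_apply]
    rcases lt_trichotomy j N with h | rfl | h
    · simp [h, h.trans (Nat.lt_succ_self N), h.ne]
    · simp
    · simp [h.ne', not_lt.2 h.le, show ¬ j < N + 1 by omega]

lemma tendsto_sum_range_smul_single (x : C₀(ℕ, 𝕜)) :
    Tendsto (fun N => ∑ k ∈ range N, x k • single k) atTop (𝓝 x) := by
  have hx : Tendsto (fun k => ‖x k‖) atTop (𝓝 0) := by
    simpa [← cocompact_eq_atTop] using (zero_at_infty x).norm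
  rw [Metric.tendsto_atTop]
  intro ε hε
  obtain ⟨N₀, hN₀⟩ := eventually_atTop.1 (hx.eventually (gt_mem_nhds (half_pos hε)))
  refine ⟨N₀, fun N hN => (dist_eq_norm _ _).trans_lt ?_⟩
  refine (norm_le_of_forall_le (half_pos hε).le fun j => ?_).trans_lt (half_lt_self hε)
  rw [sub_apply, sum_range_smul_single_apply]
  split_ifs with hj
  · simpa using (half_pos hε).le
  · simpa using (hN₀ j (hN.trans (not_lt.1 hj))).le

lemma ext_single {F : Type*} [TopologicalSpace F] [AddCommMonoid F] [Module 𝕜 F] [T2Space F]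
    {φ ψ : C₀(ℕ, 𝕜) →L[𝕜] F} (h : ∀ n, φ (single n) = ψ (single n)) : φ = ψ := by
  ext x
  have hφ := (φ.continuous.tendsto x).comp (tendsto_sum_range_smul_single x)
  have hψ := (ψ.continuous.tendsto x).comp (tendsto_sum_range_smul_single x)
  refine tendsto_nhds_unique hφ (hψ.congr fun N => ?_)
  simp [Function.comp, map_sum, h]

structure IsLowerBidiagonal (T : C₀(ℕ, 𝕜) →L[𝕜] C₀(ℕ, 𝕜)) (a b : ℕ → 𝕜) : Prop where
  apply_zero : ∀ x, T x 0 = a 0 * x 0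
  apply_succ : ∀ x k, T x (k + 1) = b k * x k + a (k + 1) * x (k + 1)

namespace IsLowerBidiagonal

variable {T : C₀(ℕ, 𝕜) →L[𝕜] C₀(ℕ, 𝕜)} {a b : ℕ → 𝕜}

lemma apply_single (hT : IsLowerBidiagonal T a b) (n : ℕ) :
    T (single n) = a n • single n + b n • single (n + 1) := by
  ext (_ | k) <;> simp [hT.apply_zero, hT.apply_succ] <;> split_ifs <;> simp_all

lemma comp_eq_zero_iff (hT : IsLowerBidiagonal T a b) (φ : StrongDual 𝕜 C₀(ℕ, 𝕜)) :
    φ ∘L T = 0 ↔ ∀ n, a n * φ (single n) + b n * φ (single (n + 1)) = 0 := by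
  constructor
  · intro h n
    simpa [hT.apply_single] using DFunLike.congr_fun h (single n)
  · intro h
    exact ext_single fun n => by simpa [hT.apply_single] using h n

lemma injective (hT : IsLowerBidiagonal T a b) (hb : ∀ k, b k ≠ 0)
    (ha : (∀ k, a k ≠ 0) ∨ ∀ k, ∃ m, k < m ∧ a m = 0) : Function.Injective T := by
  refine (injective_iff_map_eq_zero T).2 fun x hx => ext fun k => ?_
  have h0 : a 0 * x 0 = 0 := by rw [← hT.apply_zero, hx, zero_apply]
  have hsucc : ∀ k, b k * x k + a (k + 1) * x (k + 1) = 0 := fun k => by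
    rw [← hT.apply_succ, hx, zero_apply]
  rcases ha with ha | ha
  · induction k with
    | zero => exact (mul_eq_zero.1 h0).resolve_left (ha 0)
    | succ k ih => simpa [ih, ha (k + 1)] using hsucc k
  · obtain ⟨m, hkm, ham⟩ := ha k
    have hback : ∀ j, x (j + 1) = 0 → x j = 0 := fun j hj => by simpa [hj, hb j] using hsucc j
    obtain ⟨d, rfl⟩ := Nat.exists_eq_add_of_lt hkm
    have hxm : x (k + d) = 0 := by simpa [ham, hb] using hsucc (k + d)
    clear hkm ham
    induction d with
    | zero => simpa using hxm
    | succ d ih => exact ih (hback _ (by simpa [add_assoc] using hxm))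

end IsLowerBidiagonal

end NormedField

section Field

variable {𝕜 : Type*} [Field 𝕜]

def dualSolution (a b : ℕ → 𝕜) (n : ℕ) : 𝕜 := ∏ j ∈ range n, (-a j / b j)

lemma dualSolution_succ (a b : ℕ → 𝕜) (n : ℕ) :
    dualSolution a b (n + 1) = dualSolution a b n * (-a n / b n) :=
  prod_range_succ _ n

lemma dualSolution_add_period {l l' : ℕ} [NeZero l] [NeZero l'] (r : Fin l → 𝕜)
    (s : Fin l' → 𝕜) (lam : 𝕜) (n : ℕ) :
    dualSolution (fun k => r k - lam) (fun k => s k) (n + l * l') =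
      (∏ i, (lam - r i)) ^ l' / (∏ j, s j) ^ l *
        dualSolution (fun k => r k - lam) (fun k => s k) n := by
  simp only [dualSolution, prod_range_add, neg_sub, prod_div_distrib]
  rw [Fin.prod_range_mul_natCast_add (fun i => lam - r i), mul_comm l l',
    Fin.prod_range_mul_natCast_add s]
  ring

end Field

section RCLike

variable {𝕜 : Type*} [RCLike 𝕜]

lemma sum_range_norm_apply_single_le (φ : StrongDual 𝕜 C₀(ℕ, 𝕜)) (N : ℕ) :
    ∑ k ∈ range N, ‖φ (single k)‖ ≤ ‖φ‖ := by
  choose c hc1 hc using fun k => RCLike.exists_norm_eq_mul_self (φ (single k))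
  set x : C₀(ℕ, 𝕜) := ∑ k ∈ range N, c k • single k
  have hx : ‖x‖ ≤ 1 := norm_le_of_forall_le zero_le_one fun j => by
    rw [sum_range_smul_single_apply]
    split_ifs <;> simp [hc1]
  have hφx : φ x = ((∑ k ∈ range N, ‖φ (single k)‖ : ℝ) : 𝕜) := by
    simp [x, map_sum, hc]
  calc ∑ k ∈ range N, ‖φ (single k)‖ = ‖φ x‖ := by
        rw [hφx, RCLike.norm_ofReal, abs_of_nonneg (sum_nonneg fun _ _ => norm_nonneg _)]
    _ ≤ ‖φ‖ * ‖x‖ := φ.le_opNorm x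
    _ ≤ ‖φ‖ := mul_le_of_le_one_right (norm_nonneg φ) hx

lemma summable_norm_apply_single (φ : StrongDual 𝕜 C₀(ℕ, 𝕜)) :
    Summable fun k => ‖φ (single k)‖ :=
  summable_of_sum_range_le (fun _ => norm_nonneg _) (sum_range_norm_apply_single_le φ)

lemma summable_mul_apply {y : ℕ → 𝕜} (hy : Summable (‖y ·‖)) (x : C₀(ℕ, 𝕜)) :
    Summable fun k => y k * x k :=
  (hy.mul_right ‖x‖).of_norm_bounded fun k => by
    rw [norm_mul]
    exact mul_le_mul_of_nonneg_left (norm_apply_le x k) (norm_nonneg _)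

noncomputable def dualOfSummable {y : ℕ → 𝕜} (hy : Summable (‖y ·‖)) : StrongDual 𝕜 C₀(ℕ, 𝕜) :=
  LinearMap.mkContinuous
    { toFun := fun x => ∑' k, y k * x k
      map_add' := fun x x' => by
        simp only [add_apply, mul_add]
        exact (summable_mul_apply hy x).tsum_add (summable_mul_apply hy x')
      map_smul' := fun c x => by
        simp only [smul_apply, smul_eq_mul, RingHom.id_apply, ← tsum_mul_left]
        congr 1 with k
        ring }
    (∑' k, ‖y k‖) fun x => by
      calc ‖∑' k, y k * x k‖ ≤ ∑' k, ‖y k‖ * ‖x‖ :=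
            tsum_of_norm_bounded (hy.mul_right ‖x‖).hasSum fun k => by
              rw [norm_mul]
              exact mul_le_mul_of_nonneg_left (norm_apply_le x k) (norm_nonneg _)
        _ = (∑' k, ‖y k‖) * ‖x‖ := tsum_mul_right

lemma dualOfSummable_apply_single {y : ℕ → 𝕜} (hy : Summable (‖y ·‖)) (n : ℕ) :
    dualOfSummable hy (single n) = y n := by
  change ∑' k, y k * single n k = y n
  rw [tsum_eq_single n fun k hk => by simp [hk]]
  simp

lemma exists_dual_apply_single_iff (y : ℕ → 𝕜) :
    (∃ φ : StrongDual 𝕜 C₀(ℕ, 𝕜), ∀ n, φ (single n) = y n) ↔ Summable (‖y ·‖) := by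
  constructor
  · rintro ⟨φ, hφ⟩
    simpa [hφ] using summable_norm_apply_single φ
  · exact fun hy => ⟨dualOfSummable hy, dualOfSummable_apply_single hy⟩

lemma IsLowerBidiagonal.denseRange_iff {T : C₀(ℕ, 𝕜) →L[𝕜] C₀(ℕ, 𝕜)} {a b : ℕ → 𝕜}
    (hT : IsLowerBidiagonal T a b) (hb : ∀ k, b k ≠ 0) :
    DenseRange T ↔ ¬ Summable (‖dualSolution a b ·‖) := by
  have hsol : ∀ φ : StrongDual 𝕜 C₀(ℕ, 𝕜), φ ∘L T = 0 →
      ∀ n, φ (single n) = φ (single 0) * dualSolution a b n := by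
    intro φ hφ n
    induction n with
    | zero => simp [dualSolution]
    | succ n ih =>
      rw [dualSolution_succ, ← mul_assoc, ← ih]
      field_simp [hb n]
      linear_combination (hT.comp_eq_zero_iff φ).1 hφ n
  rw [ContinuousLinearMap.denseRange_iff_forall_comp_eq_zero, iff_not_comm]
  push Not
  constructor
  · intro hw
    obtain ⟨φ, hφ⟩ := (exists_dual_apply_single_iff _).2 hw
    refine ⟨φ, (hT.comp_eq_zero_iff φ).2 fun n => ?_, fun h => ?_⟩
    · rw [hφ, hφ, dualSolution_succ]
      field_simp [hb n]
      ring
    · simpa [dualSolution] using (hφ 0).symm.trans (DFunLike.congr_fun h _)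
  · rintro ⟨φ, hφ, hφ0⟩
    have h0 : φ (single 0) ≠ 0 := fun h => hφ0 (ext_single fun n => by simp [hsol φ hφ n, h])
    refine ((summable_norm_apply_single φ).div_const ‖φ (single 0)‖).congr fun n => ?_
    rw [hsol φ hφ n, norm_mul, mul_div_cancel_left₀ _ (norm_ne_zero_iff.2 h0)]

end RCLike

end ZeroAtInftyContinuousMap

open ZeroAtInftyContinuousMap

/-- The residual spectrum of `B` on `c₀` (the set of `λ` for which `B - λI` is
injective but does not have dense range) equals
`{λ : (|λ-r₁|⋯|λ-r_l|)^{1/l} < (|s₁|⋯|s_{l'}|)^{1/l'}}`. -/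
theorem stmt_8 (l l' : ℕ) [NeZero l] [NeZero l'] (r : Fin l → ℂ) (s : Fin l' → ℂ)
    (hs : ∀ j, s j ≠ 0)
    (B : ZeroAtInftyContinuousMap ℕ ℂ →L[ℂ] ZeroAtInftyContinuousMap ℕ ℂ)
    (hB0 : ∀ x : ZeroAtInftyContinuousMap ℕ ℂ, B x 0 = r 0 * x 0)
    (hB : ∀ (x : ZeroAtInftyContinuousMap ℕ ℂ) (k : ℕ),
      B x (k + 1) = s (↑k) * x k + r (↑(k + 1)) * x (k + 1)) :
    {lam : ℂ | Function.Injective ⇑(B - lam • 1) ∧ ¬ DenseRange ⇑(B - lam • 1)} =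
      {lam : ℂ | (∏ i, ‖lam - r i‖) ^ ((1 : ℝ) / l) <
        (∏ j, ‖s j‖) ^ ((1 : ℝ) / l')} := by
  ext lam
  have hT : IsLowerBidiagonal (B - lam • 1) (fun k => r k - lam) (fun k => s k) :=
    ⟨fun x => by simp [hB0, sub_mul], fun x k => by simp [hB, sub_mul]; ring⟩
  have hdiag : (∀ k : ℕ, r k - lam ≠ 0) ∨ ∀ k : ℕ, ∃ m : ℕ, k < m ∧ r m - lam = 0 := by
    by_cases h : ∃ i, r i = lam
    · obtain ⟨i, rfl⟩ := h
      refine .inr fun k => ⟨i + (k + 1) * l, by nlinarith [NeZero.pos l], ?_⟩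
      rw [sub_eq_zero]
      congr 1
      ext
      simp only [Fin.val_natCast, Nat.add_mul_mod_self_right, Nat.mod_eq_of_lt i.isLt]
    · exact .inl fun k hk => h ⟨_, sub_eq_zero.1 hk⟩
  have hspos : 0 < ∏ j, ‖s j‖ := prod_pos fun j _ => norm_pos_iff.2 (hs j)
  rw [Set.mem_ofPred_eq, Set.mem_ofPred_eq, and_iff_right (hT.injective (fun k => hs k) hdiag),
    hT.denseRange_iff fun k => hs k, not_not,
    summable_norm_iff_of_add_eq_mul (dualSolution_add_period r s lam) (by simp [dualSolution]),
    rpow_one_div_lt_rpow_one_div_iff (prod_nonneg fun _ _ => norm_nonneg _) hspos.le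
      (NeZero.ne l) (NeZero.ne l')]
  simp [norm_prod, div_lt_one (pow_pos hspos l)]
end

section
/- With r₁ = 1 − i, r₂ = −i, r₃ = −1.5, r₄ = −i and s₁ = i, s₂ = 1 + i, s₃ = −2, s₄ = −1.5, s₅ = 1 − i, s₆ = −1, the spectrum of the operator B(r₁,…,r₄; s₁,…,s₆) on c₀ equals {λ ∈ ℂ : |λ − 1 + i| · |λ + i|² · |λ + 1.5| ≤ 6^{2/3}}. -/
open Filter Topology Complex
open Fin.NatCast

/-!
Write `d = λ - r` and `σ = -s` for the diagonal and subdiagonal of `λ - B`; both are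
`12`-periodic. If no `d k` vanishes, `λ - B = D (1 - W)` with `D = diag d` and `W` the weighted
right shift with weights `σ k / d (k + 1)`. A product of `12` consecutive weights has modulus
`θ = ∏ |s k| / ∏ |λ - r k| = 36 / (|λ - 1 + i| |λ + i|² |λ + 3/2|)³`, so `‖W¹²‖ ≤ θ`, and
`1 - W` is invertible when `θ < 1`. Conversely, if `λ - B` is onto then no `d k` vanishes (at
the first zero `d j = 0` the unit vector `e_j` is not attained), and the preimage of `e₀` has
modulus `θ ^ t / |d 0|` at index `12 t`; since it tends to zero, `θ < 1`.
-/

open Finset Function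

local notation "c₀" => ZeroAtInftyContinuousMap ℕ ℂ

namespace NullSeq

def ofTendsto (f : ℕ → ℂ) (hf : Tendsto f atTop (𝓝 0)) : c₀ :=
  ⟨⟨f, continuous_of_discreteTopology⟩, by rwa [cocompact_eq_atTop]⟩

@[simp]
theorem ofTendsto_apply (f : ℕ → ℂ) (hf : Tendsto f atTop (𝓝 0)) (k : ℕ) :
    ofTendsto f hf k = f k := rfl

theorem tendsto (x : c₀) : Tendsto (⇑x) atTop (𝓝 0) := by
  have hx := x.zero_at_infty'
  rwa [cocompact_eq_atTop] at hx

theorem norm_apply_le (x : c₀) (k : ℕ) : ‖x k‖ ≤ ‖x‖ :=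
  (x.toBCF.norm_coe_le_norm k).trans_eq ZeroAtInftyContinuousMap.norm_toBCF_eq_norm

theorem norm_le {x : c₀} {C : ℝ} (hC : 0 ≤ C) (hx : ∀ k, ‖x k‖ ≤ C) : ‖x‖ ≤ C := by
  rw [← ZeroAtInftyContinuousMap.norm_toBCF_eq_norm]
  exact (BoundedContinuousFunction.norm_le hC).2 hx

def single (j : ℕ) : c₀ :=
  ofTendsto (Pi.single j 1) <| tendsto_const_nhds.congr' <| by
    filter_upwards [eventually_gt_atTop j] with k hk
    simp [hk.ne']

theorem single_apply (j k : ℕ) : single j k = if k = j then 1 else 0 := Pi.single_apply ..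

end NullSeq

namespace Function.Periodic

variable {M : Type*} {f : ℕ → M} {N : ℕ}

theorem prod_range_add [CommMonoid M] (hf : Periodic f N) (k : ℕ) :
    ∏ m ∈ range N, f (k + m) = ∏ m ∈ range N, f m := by
  induction k with
  | zero => simp
  | succ k ih =>
    rcases N with _ | n
    · simp
    rw [← ih, prod_range_succ, prod_range_succ', add_zero, add_assoc k 1 n, add_comm 1 n, hf k]
    exact congrArg (· * f k) (prod_congr rfl fun m _ => by rw [add_assoc, add_comm 1])

theorem prod_range_mul [CommMonoid M] (hf : Periodic f N) (t : ℕ) :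
    ∏ m ∈ range (t * N), f m = (∏ m ∈ range N, f m) ^ t := by
  induction t with
  | zero => simp
  | succ t ih =>
    rw [add_mul, one_mul, Finset.prod_range_add, ih, pow_succ]
    exact congrArg _ (prod_congr rfl fun m _ => by rw [add_comm]; exact hf.nat_mul t m)

theorem exists_norm_le [SeminormedAddCommGroup M] (hf : Periodic f N) (hN : 0 < N) :
    ∃ C, ∀ k, ‖f k‖ ≤ C :=
  ⟨∑ m ∈ range N, ‖f m‖, fun k => hf.map_mod_nat k ▸
    single_le_sum (fun m _ => norm_nonneg (f m)) (mem_range.2 (Nat.mod_lt k hN))⟩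

end Function.Periodic

noncomputable def shiftWeight (d s : ℕ → ℂ) (k : ℕ) : ℂ := -s k / d (k + 1)

theorem Function.Periodic.shiftWeight {d s : ℕ → ℂ} {N : ℕ} (hd : Periodic d N)
    (hs : Periodic s N) : Periodic (shiftWeight d s) N := fun k => by
  change -s (k + N) / d (k + N + 1) = -s k / d (k + 1)
  rw [add_right_comm, hd, hs]

theorem prod_norm_shiftWeight {d : ℕ → ℂ} {N : ℕ} (hd : Periodic d N) (s : ℕ → ℂ) :
    ∏ m ∈ range N, ‖shiftWeight d s m‖ = (∏ m ∈ range N, ‖s m‖) / ∏ m ∈ range N, ‖d m‖ := by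
  simp only [shiftWeight, norm_div, norm_neg, prod_div_distrib, add_comm _ 1]
  congr 1
  exact (hd.comp norm).prod_range_add 1

theorem isUnit_one_sub_of_norm_pow_lt_one {R : Type*} [NormedRing R] [HasSummableGeomSeries R]
    {x : R} {n : ℕ} (h : ‖x ^ n‖ < 1) : IsUnit (1 - x) := by
  have hcomm : Commute (1 - x) (∑ i ∈ range n, x ^ i) :=
    (mul_neg_geom_sum x n).trans (geom_sum_mul_neg x n).symm
  refine (hcomm.isUnit_mul_iff.1 ?_).1
  rw [mul_neg_geom_sum]
  exact (Units.oneSub _ h).isUnit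

def IsLowerBidiagonal (T : c₀ →L[ℂ] c₀) (d s : ℕ → ℂ) : Prop :=
  (∀ x, T x 0 = d 0 * x 0) ∧ ∀ x k, T x (k + 1) = s k * x k + d (k + 1) * x (k + 1)

def lowerBidiagonalApply (d s x : ℕ → ℂ) : ℕ → ℂ
  | 0 => d 0 * x 0
  | k + 1 => s k * x k + d (k + 1) * x (k + 1)

section lowerBidiagonalApply

variable {d s : ℕ → ℂ} {C : ℝ}

theorem norm_lowerBidiagonalApply_succ_le (hd : ∀ k, ‖d k‖ ≤ C) (hs : ∀ k, ‖s k‖ ≤ C)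
    (x : ℕ → ℂ) (k : ℕ) :
    ‖lowerBidiagonalApply d s x (k + 1)‖ ≤ C * ‖x k‖ + C * ‖x (k + 1)‖ :=
  (norm_add_le _ _).trans <| by
    simp only [norm_mul]
    gcongr
    exacts [hs k, hd _]

theorem tendsto_lowerBidiagonalApply (hd : ∀ k, ‖d k‖ ≤ C) (hs : ∀ k, ‖s k‖ ≤ C) (x : c₀) :
    Tendsto (lowerBidiagonalApply d s x) atTop (𝓝 0) := by
  refine (tendsto_add_atTop_iff_nat 1).1
    (squeeze_zero_norm (norm_lowerBidiagonalApply_succ_le hd hs x) ?_)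
  simpa using ((NullSeq.tendsto x).norm.const_mul C).add
    (((tendsto_add_atTop_iff_nat 1).2 (NullSeq.tendsto x)).norm.const_mul C)

theorem norm_lowerBidiagonalApply_le (hd : ∀ k, ‖d k‖ ≤ C) (hs : ∀ k, ‖s k‖ ≤ C) (x : c₀)
    (k : ℕ) :
    ‖lowerBidiagonalApply d s x k‖ ≤ 2 * C * ‖x‖ := by
  have hC : 0 ≤ C := (norm_nonneg _).trans (hd 0)
  rcases k with _ | k
  · calc ‖lowerBidiagonalApply d s x 0‖ = ‖d 0‖ * ‖x 0‖ := norm_mul _ _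
      _ ≤ C * ‖x‖ := by gcongr; exacts [hd 0, NullSeq.norm_apply_le x 0]
      _ ≤ 2 * C * ‖x‖ := by nlinarith [norm_nonneg x]
  · calc ‖lowerBidiagonalApply d s x (k + 1)‖ ≤ C * ‖x k‖ + C * ‖x (k + 1)‖ :=
        norm_lowerBidiagonalApply_succ_le hd hs x k
      _ ≤ C * ‖x‖ + C * ‖x‖ := by gcongr <;> exact NullSeq.norm_apply_le x _
      _ = 2 * C * ‖x‖ := by ring

end lowerBidiagonalApply

theorem exists_isLowerBidiagonal {d s : ℕ → ℂ} (hd : ∃ C, ∀ k, ‖d k‖ ≤ C)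
    (hs : ∃ C, ∀ k, ‖s k‖ ≤ C) : ∃ T, IsLowerBidiagonal T d s := by
  obtain ⟨C₁, hd⟩ := hd
  obtain ⟨C₂, hs⟩ := hs
  have hd' (k : ℕ) : ‖d k‖ ≤ max C₁ C₂ := (hd k).trans (le_max_left _ _)
  have hs' (k : ℕ) : ‖s k‖ ≤ max C₁ C₂ := (hs k).trans (le_max_right _ _)
  let L : c₀ →ₗ[ℂ] c₀ :=
    { toFun x := NullSeq.ofTendsto _ (tendsto_lowerBidiagonalApply hd' hs' x)
      map_add' x y := by
        ext (_ | k) <;>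
          simp only [ZeroAtInftyContinuousMap.coe_add, Pi.add_apply, NullSeq.ofTendsto_apply,
            lowerBidiagonalApply] <;>
          ring
      map_smul' c x := by
        ext (_ | k) <;>
          simp only [ZeroAtInftyContinuousMap.coe_smul, Pi.smul_apply, smul_eq_mul,
            NullSeq.ofTendsto_apply, RingHom.id_apply, lowerBidiagonalApply] <;>
          ring }
  have hC : 0 ≤ max C₁ C₂ := (norm_nonneg _).trans (hd' 0)
  exact ⟨L.mkContinuous (2 * max C₁ C₂) fun x =>
    NullSeq.norm_le (by positivity) (norm_lowerBidiagonalApply_le hd' hs' x),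
    fun x => rfl, fun x k => rfl⟩

namespace IsLowerBidiagonal

variable {T : c₀ →L[ℂ] c₀} {d s : ℕ → ℂ}

theorem smul_one_sub (hT : IsLowerBidiagonal T d s) (μ : ℂ) :
    IsLowerBidiagonal (μ • 1 - T) (fun k => μ - d k) (-s) := by
  refine ⟨fun x => ?_, fun x k => ?_⟩ <;>
    simp only [sub_apply, smul_apply,
      one_apply_eq_self, ZeroAtInftyContinuousMap.coe_sub,
      ZeroAtInftyContinuousMap.coe_smul, Pi.sub_apply, Pi.smul_apply, Pi.neg_apply, smul_eq_mul,
      hT.1, hT.2] <;>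
    ring

theorem forall_ne_zero_of_surjective (hT : IsLowerBidiagonal T d s) (h : Surjective T) :
    ∀ k, d k ≠ 0 := by
  classical
  by_contra! hex
  obtain ⟨x, hx⟩ := h (NullSeq.single (Nat.find hex))
  have hx_apply (k : ℕ) : T x k = if k = Nat.find hex then 1 else 0 := by
    rw [hx, NullSeq.single_apply]
  have hzero : ∀ m < Nat.find hex, x m = 0 := by
    intro m hm
    induction m with
    | zero =>
      have h0 := hx_apply 0
      rw [hT.1, if_neg hm.ne] at h0
      exact (mul_eq_zero.1 h0).resolve_left (Nat.find_min hex hm)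
    | succ m ih =>
      have h1 := hx_apply (m + 1)
      rw [hT.2, ih (by omega), if_neg hm.ne, mul_zero, zero_add] at h1
      exact (mul_eq_zero.1 h1).resolve_left (Nat.find_min hex hm)
  have hfind := hx_apply (Nat.find hex)
  rw [if_pos rfl] at hfind
  rcases hj : Nat.find hex with _ | j
  · rw [hj, hT.1, ← hj, Nat.find_spec hex, zero_mul] at hfind
    exact zero_ne_one hfind
  · rw [hj, hT.2, hzero j (by omega), ← hj, Nat.find_spec hex] at hfind
    simp at hfind

theorem apply_eq_prod_of_eq_single (hT : IsLowerBidiagonal T d s) (hd : ∀ k, d k ≠ 0)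
    {x : c₀} (hx : T x = NullSeq.single 0) (k : ℕ) :
    x k = (d 0)⁻¹ * ∏ m ∈ range k, shiftWeight d s m := by
  have hx_apply (k : ℕ) : T x k = if k = 0 then 1 else 0 := by rw [hx, NullSeq.single_apply]
  induction k with
  | zero =>
    have h0 := hx_apply 0
    rw [hT.1, if_pos rfl] at h0
    rw [prod_range_zero, mul_one, eq_inv_of_mul_eq_one_right h0]
  | succ k ih =>
    have h1 := hx_apply (k + 1)
    rw [hT.2, if_neg k.succ_ne_zero, ih] at h1
    rw [prod_range_succ, shiftWeight]
    field_simp [hd (k + 1)]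
    linear_combination h1

theorem prod_norm_lt_of_surjective (hT : IsLowerBidiagonal T d s) {N : ℕ} (hN : 0 < N)
    (hd : Periodic d N) (hs : Periodic s N) (h : Surjective T) :
    ∏ m ∈ range N, ‖s m‖ < ∏ m ∈ range N, ‖d m‖ := by
  have hd0 := hT.forall_ne_zero_of_surjective h
  obtain ⟨x, hx⟩ := h (NullSeq.single 0)
  have hpos : 0 < ∏ m ∈ range N, ‖d m‖ := prod_pos fun m _ => norm_pos_iff.2 (hd0 m)
  rw [← div_lt_one hpos, ← prod_norm_shiftWeight hd s]
  have hx_norm (t : ℕ) :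
      ‖x (t * N)‖ = ‖d 0‖⁻¹ * (∏ m ∈ range N, ‖shiftWeight d s m‖) ^ t := by
    rw [hT.apply_eq_prod_of_eq_single hd0 hx, norm_mul, norm_inv, norm_prod]
    exact congrArg _ (((hd.shiftWeight hs).comp norm).prod_range_mul t)
  have hmul : Tendsto (fun t => t * N) atTop atTop :=
    StrictMono.tendsto_atTop fun a b hab => by gcongr
  have hxN := ((NullSeq.tendsto x).comp hmul).norm.const_mul ‖d 0‖
  simp only [Function.comp_def, hx_norm, norm_zero, mul_zero, ← mul_assoc,
    mul_inv_cancel₀ (norm_ne_zero_iff.2 (hd0 0)), one_mul] at hxN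
  rw [tendsto_pow_atTop_nhds_zero_iff, abs_of_nonneg (by positivity)] at hxN
  exact hxN

theorem pow_apply_add {W : c₀ →L[ℂ] c₀} {q : ℕ → ℂ} (hW : IsLowerBidiagonal W 0 q)
    (n : ℕ) (x : c₀) (k : ℕ) : (W ^ n) x (k + n) = (∏ m ∈ range n, q (k + m)) * x k := by
  induction n with
  | zero => simp
  | succ n ih =>
    rw [pow_succ', mul_apply_eq_comp, ← add_assoc, hW.2, ih, prod_range_succ]
    simp only [Pi.zero_apply, zero_mul, add_zero]
    ring

theorem pow_apply_of_lt {W : c₀ →L[ℂ] c₀} {q : ℕ → ℂ} (hW : IsLowerBidiagonal W 0 q)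
    {n k : ℕ} (hk : k < n) (x : c₀) : (W ^ n) x k = 0 := by
  induction n generalizing k with
  | zero => omega
  | succ n ih =>
    rw [pow_succ', mul_apply_eq_comp]
    rcases k with _ | k
    · simp [hW.1]
    · rw [hW.2, ih (by omega), mul_zero, Pi.zero_apply, zero_mul, add_zero]

theorem norm_pow_le {W : c₀ →L[ℂ] c₀} {q : ℕ → ℂ} (hW : IsLowerBidiagonal W 0 q)
    {n : ℕ} {θ : ℝ} (hθ : 0 ≤ θ) (hq : ∀ k, ∏ m ∈ range n, ‖q (k + m)‖ ≤ θ) :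
    ‖W ^ n‖ ≤ θ := by
  refine ContinuousLinearMap.opNorm_le_bound _ hθ fun x =>
    NullSeq.norm_le (by positivity) fun k => ?_
  rcases lt_or_ge k n with hk | hk
  · rw [hW.pow_apply_of_lt hk, norm_zero]
    positivity
  · obtain ⟨j, rfl⟩ := Nat.exists_eq_add_of_le' hk
    rw [hW.pow_apply_add, norm_mul, norm_prod]
    exact mul_le_mul (hq j) (NullSeq.norm_apply_le x j) (norm_nonneg _) hθ

theorem isUnit_of_prod_norm_lt (hT : IsLowerBidiagonal T d s) {N : ℕ} (hN : 0 < N)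
    (hd : Periodic d N) (hs : Periodic s N)
    (h : ∏ m ∈ range N, ‖s m‖ < ∏ m ∈ range N, ‖d m‖) : IsUnit T := by
  have hpos : 0 < ∏ m ∈ range N, ‖d m‖ := (prod_nonneg fun m _ => norm_nonneg _).trans_lt h
  have hd0 (k : ℕ) : d k ≠ 0 := by
    rw [← hd.map_mod_nat k, ← norm_ne_zero_iff]
    exact prod_ne_zero_iff.1 hpos.ne' _ (mem_range.2 (Nat.mod_lt k hN))
  obtain ⟨D, hD⟩ := exists_isLowerBidiagonal (s := 0) (hd.exists_norm_le hN) ⟨0, by simp⟩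
  obtain ⟨D', hD'⟩ := exists_isLowerBidiagonal (d := fun k => (d k)⁻¹) (s := 0)
    ((hd.comp (·⁻¹)).exists_norm_le hN) ⟨0, by simp⟩
  obtain ⟨W, hW⟩ := exists_isLowerBidiagonal (d := 0) ⟨0, by simp⟩
    ((hd.shiftWeight hs).exists_norm_le hN)
  have hT_eq : T = D * (1 - W) := by
    ext x (_ | k)
    · simp [hT.1, hD.1, hW.1]
    · simp only [hT.2, hD.2, hW.2, mul_apply_eq_comp, sub_apply,
        one_apply_eq_self, map_sub, ZeroAtInftyContinuousMap.coe_sub,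
        Pi.sub_apply, Pi.zero_apply, zero_mul, zero_add, add_zero, shiftWeight]
      field_simp [hd0 (k + 1)]
      ring
  have hD_unit : IsUnit D := by
    refine ⟨⟨D, D', ?_, ?_⟩, rfl⟩ <;> ext x (_ | k) <;> simp [hD.1, hD.2, hD'.1, hD'.2, hd0]
  have hW_norm : ‖W ^ N‖ < 1 := by
    have hθ : ∏ m ∈ range N, ‖shiftWeight d s m‖ < 1 := by
      rwa [prod_norm_shiftWeight hd, div_lt_one hpos]
    refine (hW.norm_pow_le (by positivity) fun k => ?_).trans_lt hθ
    exact (((hd.shiftWeight hs).comp norm).prod_range_add k).le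
  rw [hT_eq]
  exact hD_unit.mul (isUnit_one_sub_of_norm_pow_lt_one (R := c₀ →L[ℂ] c₀) hW_norm)

theorem isUnit_iff_prod_norm_lt (hT : IsLowerBidiagonal T d s) {N : ℕ} (hN : 0 < N)
    (hd : Periodic d N) (hs : Periodic s N) :
    IsUnit T ↔ ∏ m ∈ range N, ‖s m‖ < ∏ m ∈ range N, ‖d m‖ :=
  ⟨fun h => hT.prod_norm_lt_of_surjective hN hd hs
    (ContinuousLinearMap.isUnit_iff_bijective.1 h).2, hT.isUnit_of_prod_norm_lt hN hd hs⟩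

end IsLowerBidiagonal

theorem prod_range_twelve_subdiagonal :
    ∏ m ∈ range 12, (![I, 1 + I, -2, -(3/2), 1 - I, -1] : Fin 6 → ℂ) m = -36 := by
  simp only [prod_range_succ, prod_range_zero, Nat.cast_ofNat, Nat.cast_zero, Nat.cast_one,
    Matrix.cons_val]
  linear_combination (9 * I ^ 4 - 27 * I ^ 2 + 36) * I_sq

theorem prod_range_twelve_diagonal (lam : ℂ) :
    ∏ m ∈ range 12, (lam - (![1 - I, -I, -(3/2), -I] : Fin 4 → ℂ) m) =
      ((lam - (1 - I)) * (lam + I) ^ 2 * (lam + 3/2)) ^ 3 := by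
  simp only [prod_range_succ, prod_range_zero, Nat.cast_ofNat, Nat.cast_zero, Nat.cast_one,
    Matrix.cons_val]
  ring

theorem pow_three_le_thirtySix_iff {a : ℝ} (ha : 0 ≤ a) :
    a ^ 3 ≤ 36 ↔ a ≤ (6 : ℝ) ^ ((2 : ℝ) / 3) := by
  have h : ((6 : ℝ) ^ ((2 : ℝ) / 3)) ^ 3 = 36 := by
    rw [← Real.rpow_natCast, ← Real.rpow_mul (by norm_num)]
    norm_num
  rw [← h, pow_le_pow_iff_left₀ ha (by positivity) (by norm_num)]

/-- With `r = (1-i, -i, -3/2, -i)` and `s = (i, 1+i, -2, -3/2, 1-i, -1)`, the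
spectrum of `B(r₁,…,r₄; s₁,…,s₆)` on `c₀` equals
`{λ : |λ-(1-i)| · |λ+i|² · |λ+3/2| ≤ 6^{2/3}}`. -/
theorem stmt_17
    (B : ZeroAtInftyContinuousMap ℕ ℂ →L[ℂ] ZeroAtInftyContinuousMap ℕ ℂ)
    (hB0 : ∀ x : ZeroAtInftyContinuousMap ℕ ℂ,
      B x 0 = (![1 - I, -I, -(3/2), -I] : Fin 4 → ℂ) 0 * x 0)
    (hB : ∀ (x : ZeroAtInftyContinuousMap ℕ ℂ) (k : ℕ),
      B x (k + 1) = (![I, 1 + I, -2, -(3/2), 1 - I, -1] : Fin 6 → ℂ) (↑k) * x k +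
        (![1 - I, -I, -(3/2), -I] : Fin 4 → ℂ) (↑(k + 1)) * x (k + 1)) :
    spectrum ℂ B = {lam : ℂ | ‖lam - (1 - I)‖ * ‖lam + I‖ ^ 2 *
      ‖lam + 3/2‖ ≤ (6 : ℝ) ^ ((2 : ℝ) / 3)} := by
  set r : ℕ → ℂ := fun k => (![1 - I, -I, -(3/2), -I] : Fin 4 → ℂ) k
  set σ : ℕ → ℂ := fun k => (![I, 1 + I, -2, -(3/2), 1 - I, -1] : Fin 6 → ℂ) k
  have hBd : IsLowerBidiagonal B r σ := ⟨hB0, hB⟩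
  have hr : Periodic r 12 := fun k => by simp [r, Nat.cast_add]
  have hσ : Periodic σ 12 := fun k => by simp [σ, Nat.cast_add]
  ext lam
  rw [spectrum.mem_iff, Algebra.algebraMap_eq_smul_one,
    (hBd.smul_one_sub lam).isUnit_iff_prod_norm_lt (by norm_num) (hr.comp (lam - ·))
      (hσ.comp Neg.neg), not_lt, Set.mem_ofPred_eq]
  simp only [Pi.neg_apply, norm_neg, ← norm_prod, r, σ, prod_range_twelve_subdiagonal,
    prod_range_twelve_diagonal]
  rw [norm_pow, norm_mul, norm_mul, norm_pow, Complex.norm_ofNat]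
  exact pow_three_le_thirtySix_iff (by positivity)
end
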